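/- arXiv:1202.1319 — 2 statements merged into one kernel-verified Lean document; each statement's English description precedes it below -/
import Mathlib

section
/- Let $d \geq 2$ be an integer and let $(J_n)_{n \geq 0}$ be the Markov chain on $\mathbb{N}$ with $J_0 = 0$, transitioning from $0$ to $1$ with probability $1$, and from $k \geq 1$ to $k+1$ with probability $d/(d+1)$ and to $k-1$ with probability $1/(d+1)$. Then for every $n \in \mathbb{N}$, $\mathbb{P}\big(J_m \leq J_n \text{ for all } 0 \leq m \leq n\big) \geq 1 - 2/d$. -/
/-!
Let `D n = max_{m ≤ n} J m - J n` be the drawdown of the chain. An up-step lowers it by one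
(truncated at `0`), a down-step raises it by one, and from `J n = 0` the chain steps up surely,
which can only lower `D`. Conditioning on the history up to time `n` therefore gives
`P(D (n+1) ≥ k+1) ≤ d/(d+1) · P(D n ≥ k+2) + 1/(d+1) · P(D n ≥ k)`, a recursion that `d⁻¹ ^ k`
solves with equality; by induction `P(D n ≥ k) ≤ d⁻¹ ^ k`. For `k = 1` this says that `J n`
is a running maximum with probability at least `1 - 1/d ≥ 1 - 2/d`.
-/

open MeasureTheory ProbabilityTheory ENNReal

namespace DaryJumpChain

def drawdown (x : ℕ → ℕ) (n : ℕ) : ℕ := (Finset.range (n + 1)).sup x - x n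

lemma drawdown_zero (x : ℕ → ℕ) : drawdown x 0 = 0 := by
  simp [drawdown]

lemma drawdown_congr {x y : ℕ → ℕ} {n : ℕ} (h : ∀ i ≤ n, x i = y i) :
    drawdown x n = drawdown y n := by
  have hsup : (Finset.range (n + 1)).sup x = (Finset.range (n + 1)).sup y :=
    Finset.sup_congr rfl fun i hi => h i (Nat.lt_succ_iff.mp (Finset.mem_range.mp hi))
  rw [drawdown, drawdown, hsup, h n le_rfl]

lemma drawdown_eq_zero_iff {x : ℕ → ℕ} {n : ℕ} :
    drawdown x n = 0 ↔ ∀ m ≤ n, x m ≤ x n := by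
  rw [drawdown, Nat.sub_eq_zero_iff_le, Finset.sup_le_iff]
  simp only [Finset.mem_range, Nat.lt_succ_iff]

lemma drawdown_succ_of_up {x : ℕ → ℕ} {n : ℕ} (h : x (n + 1) = x n + 1) :
    drawdown x (n + 1) = drawdown x n - 1 := by
  have hle : x n ≤ (Finset.range (n + 1)).sup x := Finset.le_sup (by simp)
  simp only [drawdown, Finset.range_add_one (n := n + 1), Finset.sup_insert, h]
  omega

lemma drawdown_succ_of_down {x : ℕ → ℕ} {n : ℕ} (h : x (n + 1) + 1 = x n) :
    drawdown x (n + 1) = drawdown x n + 1 := by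
  have hle : x n ≤ (Finset.range (n + 1)).sup x := Finset.le_sup (by simp)
  simp only [drawdown, Finset.range_add_one (n := n + 1), Finset.sup_insert]
  omega

lemma measure_univ_le_of_fiberwise {Ω β : Type*} [MeasurableSpace Ω] [MeasurableSpace β]
    [Countable β] [MeasurableSingletonClass β] {ν ρ : Measure Ω} {f : Ω → β}
    (hf : Measurable f) (h : ∀ ω, ν (f ⁻¹' {f ω}) ≤ ρ (f ⁻¹' {f ω})) :
    ν Set.univ ≤ ρ Set.univ := by
  have hfiber : ∀ b ∈ (Set.univ : Set β), MeasurableSet (f ⁻¹' {b}) :=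
    fun b _ => hf (measurableSet_singleton b)
  rw [← Set.preimage_univ (f := f), ← tsum_measure_preimage_singleton Set.countable_univ hfiber,
    ← tsum_measure_preimage_singleton Set.countable_univ hfiber]
  refine ENNReal.tsum_le_tsum fun ⟨b, _⟩ => ?_
  by_cases hb : b ∈ Set.range f
  · obtain ⟨ω, rfl⟩ := hb
    exact h ω
  · simp [Set.preimage_singleton_eq_empty.mpr hb]

lemma measure_inter_inter_eq_mul {Ω : Type*} [MeasurableSpace Ω] {μ : Measure Ω}
    {C E T : Set Ω} {c : ℝ≥0∞} (hE : C ∩ E = C ∨ C ∩ E = ∅) (hT : μ (C ∩ T) = μ C * c) :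
    μ (C ∩ E ∩ T) = μ (C ∩ E) * c := by
  rcases hE with hE | hE <;> simp [hE, hT]

lemma one_sub_measure_le_measure_compl {Ω : Type*} [MeasurableSpace Ω] (μ : Measure Ω)
    [IsProbabilityMeasure μ] (s : Set Ω) : 1 - μ s ≤ μ sᶜ := by
  rw [tsub_le_iff_right, ← measure_univ (μ := μ), add_comm]
  exact measure_univ_le_add_compl s

noncomputable def upProb (d a : ℕ) : ℝ≥0∞ :=
  if a = 0 then 1 else (d : ℝ≥0∞) / ((d : ℝ≥0∞) + 1)

noncomputable def downProb (d a : ℕ) : ℝ≥0∞ :=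
  if a = 0 then 0 else 1 / ((d : ℝ≥0∞) + 1)

lemma upProb_add_downProb (d a : ℕ) : upProb d a + downProb d a = 1 := by
  unfold upProb downProb
  split_ifs
  · simp
  · rw [ENNReal.div_add_div_same, ENNReal.div_self (by simp) (by simp)]

lemma upProb_mul_add_downProb_mul_le (d a : ℕ) {x y : ℝ≥0∞} (hxy : x ≤ y) :
    upProb d a * x + downProb d a * y ≤ (d : ℝ≥0∞) / (d + 1) * x + 1 / (d + 1) * y := by
  unfold upProb downProb
  split_ifs
  · calc 1 * x + 0 * y = ((d : ℝ≥0∞) / (d + 1) + 1 / (d + 1)) * x := by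
          rw [ENNReal.div_add_div_same, ENNReal.div_self (by simp) (by simp)]; simp
      _ ≤ _ := by rw [add_mul]; gcongr
  · exact le_rfl

lemma div_mul_inv_pow_add_div_mul_inv_pow {d : ℕ} (hd : d ≠ 0) (k : ℕ) :
    (d : ℝ≥0∞) / (d + 1) * (d : ℝ≥0∞)⁻¹ ^ (k + 2) + 1 / (d + 1) * (d : ℝ≥0∞)⁻¹ ^ k
      = (d : ℝ≥0∞)⁻¹ ^ (k + 1) := by
  have hd' : (d : NNReal) ≠ 0 := by exact_mod_cast hd
  have key : (d : NNReal) / (d + 1) * (d : NNReal)⁻¹ ^ (k + 2) +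
      1 / (d + 1) * (d : NNReal)⁻¹ ^ k = (d : NNReal)⁻¹ ^ (k + 1) := by
    simp only [inv_pow]
    field_simp
    ring
  have := congrArg ((↑) : NNReal → ℝ≥0∞) key
  push_cast [ENNReal.coe_inv hd', ENNReal.coe_div (by positivity : (d : NNReal) + 1 ≠ 0)] at this
  exact this

section Walk

variable {Ω : Type*}

def cylinder (J : ℕ → Ω → ℕ) (n : ℕ) (ω₀ : Ω) : Set Ω := {ω | ∀ i ≤ n, J i ω = J i ω₀}

def history (J : ℕ → Ω → ℕ) (n : ℕ) (ω : Ω) : Fin (n + 1) → ℕ := fun i => J i ω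

lemma history_preimage_singleton (J : ℕ → Ω → ℕ) (n : ℕ) (ω₀ : Ω) :
    history J n ⁻¹' {history J n ω₀} = cylinder J n ω₀ := by
  ext ω
  simp [history, cylinder, funext_iff, Fin.forall_iff]

lemma cylinder_inter_drawdown_eq_self_or_empty (J : ℕ → Ω → ℕ) (n : ℕ) (ω₀ : Ω)
    (P : ℕ → Prop) :
    cylinder J n ω₀ ∩ {ω | P (drawdown (J · ω) n)} = cylinder J n ω₀ ∨
      cylinder J n ω₀ ∩ {ω | P (drawdown (J · ω) n)} = ∅ := by
  have hconst : ∀ ω ∈ cylinder J n ω₀, drawdown (J · ω) n = drawdown (J · ω₀) n :=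
    fun ω hω => drawdown_congr hω
  by_cases hP : P (drawdown (J · ω₀) n)
  · left
    exact Set.inter_eq_left.mpr fun ω hω => by simp [hconst ω hω, hP]
  · right
    exact Set.eq_empty_iff_forall_notMem.mpr fun ω hω => hP (hconst ω hω.1 ▸ hω.2)

variable [MeasurableSpace Ω]

structure IsDaryJumpChain (μ : Measure Ω) (d : ℕ) (J : ℕ → Ω → ℕ) : Prop where
  measurable : ∀ n, Measurable (J n)
  up : ∀ (n : ℕ) (j : ℕ → ℕ),
    μ ({ω | ∀ i ≤ n, J i ω = j i} ∩ {ω | J (n + 1) ω = j n + 1}) =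
      μ {ω | ∀ i ≤ n, J i ω = j i} * upProb d (j n)
  down : ∀ (n : ℕ) (j : ℕ → ℕ),
    μ ({ω | ∀ i ≤ n, J i ω = j i} ∩ {ω | J (n + 1) ω + 1 = j n}) =
      μ {ω | ∀ i ≤ n, J i ω = j i} * downProb d (j n)

variable {μ : Measure Ω} {d : ℕ} {J : ℕ → Ω → ℕ}

lemma IsDaryJumpChain.measurable_history (hJ : IsDaryJumpChain μ d J) (n : ℕ) :
    Measurable (history J n) :=
  measurable_pi_lambda _ fun i => hJ.measurable i

lemma IsDaryJumpChain.measurableSet_cylinder (hJ : IsDaryJumpChain μ d J) (n : ℕ) (ω₀ : Ω) :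
    MeasurableSet (cylinder J n ω₀) :=
  history_preimage_singleton J n ω₀ ▸ hJ.measurable_history n (measurableSet_singleton _)

lemma IsDaryJumpChain.measure_cylinder_inter_up (hJ : IsDaryJumpChain μ d J) (n : ℕ)
    (ω₀ : Ω) :
    μ (cylinder J n ω₀ ∩ {ω | J (n + 1) ω = J n ω₀ + 1}) =
      μ (cylinder J n ω₀) * upProb d (J n ω₀) :=
  hJ.up n (J · ω₀)

lemma IsDaryJumpChain.measure_cylinder_inter_down (hJ : IsDaryJumpChain μ d J) (n : ℕ)
    (ω₀ : Ω) :
    μ (cylinder J n ω₀ ∩ {ω | J (n + 1) ω + 1 = J n ω₀}) =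
      μ (cylinder J n ω₀) * downProb d (J n ω₀) :=
  hJ.down n (J · ω₀)

lemma IsDaryJumpChain.measure_cylinder_diff_steps [IsFiniteMeasure μ]
    (hJ : IsDaryJumpChain μ d J) (n : ℕ) (ω₀ : Ω) :
    μ (cylinder J n ω₀ \
      ({ω | J (n + 1) ω = J n ω₀ + 1} ∪ {ω | J (n + 1) ω + 1 = J n ω₀})) = 0 := by
  set C := cylinder J n ω₀
  set U : Set Ω := {ω | J (n + 1) ω = J n ω₀ + 1}
  set W : Set Ω := {ω | J (n + 1) ω + 1 = J n ω₀}
  have hU : MeasurableSet U := hJ.measurable (n + 1) (measurableSet_singleton _)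
  have hW : MeasurableSet W := (hJ.measurable (n + 1)).add_const 1 (measurableSet_singleton _)
  have hdisj : Disjoint (C ∩ U) (C ∩ W) := by
    refine Set.disjoint_left.mpr fun ω hωU hωW => ?_
    have h₁ : J (n + 1) ω = J n ω₀ + 1 := hωU.2
    have h₂ : J (n + 1) ω + 1 = J n ω₀ := hωW.2
    omega
  have hsteps : μ (C ∩ (U ∪ W)) = μ C := by
    rw [Set.inter_union_distrib_left,
      measure_union hdisj ((hJ.measurableSet_cylinder n ω₀).inter hW),
      hJ.measure_cylinder_inter_up, hJ.measure_cylinder_inter_down, ← mul_add,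
      upProb_add_downProb, mul_one]
  have hsplit : μ (C ∩ (U ∪ W)) + μ (C \ (U ∪ W)) = μ C :=
    measure_inter_add_sdiff C (hU.union hW)
  rw [hsteps] at hsplit
  exact (ENNReal.add_right_inj (measure_ne_top μ C)).1 (hsplit.trans (add_zero _).symm)

lemma IsDaryJumpChain.measure_cylinder_inter_drawdown_succ_le [IsFiniteMeasure μ]
    (hJ : IsDaryJumpChain μ d J) (n k : ℕ) (ω₀ : Ω) :
    μ (cylinder J n ω₀ ∩ {ω | k + 1 ≤ drawdown (J · ω) (n + 1)}) ≤
      (d : ℝ≥0∞) / (d + 1) * μ (cylinder J n ω₀ ∩ {ω | k + 2 ≤ drawdown (J · ω) n}) +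
        1 / (d + 1) * μ (cylinder J n ω₀ ∩ {ω | k ≤ drawdown (J · ω) n}) := by
  set C := cylinder J n ω₀
  set U : Set Ω := {ω | J (n + 1) ω = J n ω₀ + 1}
  set W : Set Ω := {ω | J (n + 1) ω + 1 = J n ω₀}
  set Efar : Set Ω := {ω | k + 2 ≤ drawdown (J · ω) n}
  set Enear : Set Ω := {ω | k ≤ drawdown (J · ω) n}
  have hsub : C ∩ {ω | k + 1 ≤ drawdown (J · ω) (n + 1)} ⊆
      C ∩ Efar ∩ U ∪ C ∩ Enear ∩ W ∪ C \ (U ∪ W) := by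
    rintro ω ⟨hC, hk⟩
    have hk : k + 1 ≤ drawdown (J · ω) (n + 1) := hk
    have hJn : J n ω = J n ω₀ := hC n le_rfl
    by_cases hU : ω ∈ U
    · have hup := drawdown_succ_of_up (x := (J · ω)) (n := n) (hJn ▸ hU)
      exact Or.inl (Or.inl ⟨⟨hC, show k + 2 ≤ drawdown (J · ω) n by omega⟩, hU⟩)
    by_cases hW : ω ∈ W
    · have hdown := drawdown_succ_of_down (x := (J · ω)) (n := n) (hJn ▸ hW)
      exact Or.inl (Or.inr ⟨⟨hC, show k ≤ drawdown (J · ω) n by omega⟩, hW⟩)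
    exact Or.inr ⟨hC, fun h => h.elim hU hW⟩
  calc μ (C ∩ {ω | k + 1 ≤ drawdown (J · ω) (n + 1)})
      ≤ μ (C ∩ Efar ∩ U) + μ (C ∩ Enear ∩ W) + μ (C \ (U ∪ W)) :=
        (measure_mono hsub).trans <| (measure_union_le _ _).trans <|
          add_le_add_left (measure_union_le _ _) _
    _ = upProb d (J n ω₀) * μ (C ∩ Efar) + downProb d (J n ω₀) * μ (C ∩ Enear) := by
        rw [hJ.measure_cylinder_diff_steps, add_zero,
          measure_inter_inter_eq_mul (cylinder_inter_drawdown_eq_self_or_empty J n ω₀ _)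
            (hJ.measure_cylinder_inter_up n ω₀),
          measure_inter_inter_eq_mul (cylinder_inter_drawdown_eq_self_or_empty J n ω₀ _)
            (hJ.measure_cylinder_inter_down n ω₀), mul_comm, mul_comm (μ _)]
    _ ≤ _ := upProb_mul_add_downProb_mul_le d _ <|
        measure_mono <| Set.inter_subset_inter_right C fun ω (hω : k + 2 ≤ _) =>
          show k ≤ _ by omega

lemma IsDaryJumpChain.measure_succ_le_drawdown_succ_le [IsFiniteMeasure μ]
    (hJ : IsDaryJumpChain μ d J) (n k : ℕ) :
    μ {ω | k + 1 ≤ drawdown (J · ω) (n + 1)} ≤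
      (d : ℝ≥0∞) / (d + 1) * μ {ω | k + 2 ≤ drawdown (J · ω) n} +
        1 / (d + 1) * μ {ω | k ≤ drawdown (J · ω) n} := by
  have h := measure_univ_le_of_fiberwise (hJ.measurable_history n)
    (ν := μ.restrict {ω | k + 1 ≤ drawdown (J · ω) (n + 1)})
    (ρ := ((d : ℝ≥0∞) / (d + 1)) • μ.restrict {ω | k + 2 ≤ drawdown (J · ω) n} +
      (1 / ((d : ℝ≥0∞) + 1)) • μ.restrict {ω | k ≤ drawdown (J · ω) n}) fun ω₀ => by
    simp only [history_preimage_singleton, Measure.add_apply, Measure.smul_apply, smul_eq_mul,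
      Measure.restrict_apply (hJ.measurableSet_cylinder n ω₀)]
    exact hJ.measure_cylinder_inter_drawdown_succ_le n k ω₀
  simpa only [Measure.add_apply, Measure.smul_apply, smul_eq_mul,
    Measure.restrict_apply_univ] using h

lemma IsDaryJumpChain.measure_le_drawdown_le_inv_pow [IsProbabilityMeasure μ]
    (hJ : IsDaryJumpChain μ d J) (hd : d ≠ 0) (n k : ℕ) :
    μ {ω | k ≤ drawdown (J · ω) n} ≤ (d : ℝ≥0∞)⁻¹ ^ k := by
  induction n generalizing k with
  | zero =>
    cases k with
    | zero => simp
    | succ k => simp [drawdown_zero]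
  | succ n ih =>
    cases k with
    | zero => simp
    | succ k =>
      calc μ {ω | k + 1 ≤ drawdown (J · ω) (n + 1)}
          ≤ (d : ℝ≥0∞) / (d + 1) * μ {ω | k + 2 ≤ drawdown (J · ω) n} +
              1 / (d + 1) * μ {ω | k ≤ drawdown (J · ω) n} :=
            hJ.measure_succ_le_drawdown_succ_le n k
        _ ≤ (d : ℝ≥0∞) / (d + 1) * (d : ℝ≥0∞)⁻¹ ^ (k + 2) +
              1 / (d + 1) * (d : ℝ≥0∞)⁻¹ ^ k := by
            gcongr
            exacts [ih (k + 2), ih k]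
        _ = (d : ℝ≥0∞)⁻¹ ^ (k + 1) := div_mul_inv_pow_add_div_mul_inv_pow hd k

end Walk

end DaryJumpChain

open DaryJumpChain in
theorem stmt_10_general {Ω : Type*} [MeasurableSpace Ω] (μ : Measure Ω) [IsProbabilityMeasure μ]
    (d : ℕ) (hd : 2 ≤ d) (J : ℕ → Ω → ℕ) (hmeas : ∀ n, Measurable (J n))
    (hup : ∀ (n : ℕ) (j : ℕ → ℕ),
      μ ({ω | ∀ i ≤ n, J i ω = j i} ∩ {ω | J (n + 1) ω = j n + 1}) =
        μ {ω | ∀ i ≤ n, J i ω = j i} *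
          (if j n = 0 then 1 else (d : ℝ≥0∞) / ((d : ℝ≥0∞) + 1)))
    (hdown : ∀ (n : ℕ) (j : ℕ → ℕ),
      μ ({ω | ∀ i ≤ n, J i ω = j i} ∩ {ω | J (n + 1) ω + 1 = j n}) =
        μ {ω | ∀ i ≤ n, J i ω = j i} *
          (if j n = 0 then 0 else 1 / ((d : ℝ≥0∞) + 1))) :
    ∀ n : ℕ, ENNReal.ofReal (1 - 2 / (d:ℝ)) ≤ μ {ω | ∀ m ≤ n, J m ω ≤ J n ω} := by
  intro n
  have hJ : IsDaryJumpChain μ d J := ⟨hmeas, hup, hdown⟩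
  have hbad : μ {ω | 1 ≤ drawdown (J · ω) n} ≤ (d : ℝ≥0∞)⁻¹ := by
    simpa using hJ.measure_le_drawdown_le_inv_pow (by omega) n 1
  have hgood : {ω | 1 ≤ drawdown (J · ω) n}ᶜ = {ω | ∀ m ≤ n, J m ω ≤ J n ω} := by
    ext ω
    simp [Nat.one_le_iff_ne_zero, drawdown_eq_zero_iff]
  have hd' : (0 : ℝ) < d := by exact_mod_cast (by omega : 0 < d)
  calc ENNReal.ofReal (1 - 2 / (d : ℝ)) ≤ ENNReal.ofReal (1 - 1 / (d : ℝ)) := by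
        gcongr
        norm_num
    _ = 1 - (d : ℝ≥0∞)⁻¹ := by
        rw [ENNReal.ofReal_sub _ (by positivity), one_div, ENNReal.ofReal_one,
          ENNReal.ofReal_inv_of_pos hd', ENNReal.ofReal_natCast]
    _ ≤ 1 - μ {ω | 1 ≤ drawdown (J · ω) n} := tsub_le_tsub_left hbad 1
    _ ≤ μ {ω | ∀ m ≤ n, J m ω ≤ J n ω} := hgood ▸ one_sub_measure_le_measure_compl μ _

/-- The jump chain of the distance-from-root process of random walk on the `d`-ary tree:
a Markov chain on ℕ started at 0, reflected at 0, stepping up with probability `d/(d+1)`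
and down with probability `1/(d+1)`, is at a running maximum at time `n` with probability
at least `1 - 2/d`. The Markov property is encoded through cylinder events. -/
theorem stmt_10 {Ω : Type*} [MeasurableSpace Ω] (μ : Measure Ω) [IsProbabilityMeasure μ]
    (d : ℕ) (hd : 2 ≤ d) (J : ℕ → Ω → ℕ) (hmeas : ∀ n, Measurable (J n))
    (hJ0 : ∀ ω, J 0 ω = 0)
    (hup : ∀ (n : ℕ) (j : ℕ → ℕ),
      μ ({ω | ∀ i ≤ n, J i ω = j i} ∩ {ω | J (n + 1) ω = j n + 1}) =
        μ {ω | ∀ i ≤ n, J i ω = j i} *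
          (if j n = 0 then 1 else (d : ℝ≥0∞) / ((d : ℝ≥0∞) + 1)))
    (hdown : ∀ (n : ℕ) (j : ℕ → ℕ),
      μ ({ω | ∀ i ≤ n, J i ω = j i} ∩ {ω | J (n + 1) ω + 1 = j n}) =
        μ {ω | ∀ i ≤ n, J i ω = j i} *
          (if j n = 0 then 0 else 1 / ((d : ℝ≥0∞) + 1))) :
    ∀ n : ℕ, ENNReal.ofReal (1 - 2 / (d:ℝ)) ≤ μ {ω | ∀ m ≤ n, J m ω ≤ J n ω} :=
  stmt_10_general μ d hd J hmeas hup hdown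
end

section
/- Let $d \geq 39$ be an integer and set $T = 429/d$, $c_1^* = d/18$, and $c_2^* = \frac{3(d-1)}{4(d+1)}\big(1 - e^{-(d-1)T/2}\big)$. Then $c_2^*\, c_1^*\, T - 2(1 - c_2^*) > 0$. -/
/-!
The product `c₁ T = 429 / 18` does not depend on `d`. For `d ≥ 2` the exponent `(d - 1) T / 2`
is at least `1`, so `1 - e^{-(d-1)T/2} > 1 / 2`, and the prefactor `3(d-1)/(4(d+1))` is
increasing in `d`, hence at least `57 / 80` for `d ≥ 39`. Thus `c₂ ≥ 57 / 160`, well above the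
threshold `36 / 465` at which `c₂ c₁ T = 2 (1 - c₂)`.
-/

open Real

lemma exp_neg_lt_half {x : ℝ} (hx : 1 ≤ x) : exp (-x) < 1 / 2 :=
  (exp_le_exp.2 (neg_le_neg hx)).trans_lt exp_neg_one_lt_half

lemma one_le_sub_one_mul_div_two {d : ℝ} (hd : 2 ≤ d) : 1 ≤ (d - 1) * (429 / d) / 2 := by
  rw [mul_div_assoc', le_div_iff₀ (by norm_num), le_div_iff₀ (by linarith)]
  linarith

lemma prefactor_ge {d : ℝ} (hd : 39 ≤ d) : 57 / 80 ≤ 3 * (d - 1) / (4 * (d + 1)) := by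
  rw [le_div_iff₀ (by linarith)]
  linarith

theorem stmt_13 (d : ℕ) (hd : 39 ≤ d) :
    let T : ℝ := 429 / d
    let c₁ : ℝ := (d:ℝ) / 18
    let c₂ : ℝ := 3 * ((d:ℝ) - 1) / (4 * ((d:ℝ) + 1)) * (1 - Real.exp (-((d:ℝ) - 1) * T / 2))
    c₂ * c₁ * T - 2 * (1 - c₂) > 0 := by
  intro T c₁ c₂
  have hd' : (39 : ℝ) ≤ d := by exact_mod_cast hd
  have hc₁T : c₁ * T = 429 / 18 := by
    simp only [c₁, T]
    field_simp
  have hexp : exp (-((d:ℝ) - 1) * T / 2) < 1 / 2 := by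
    rw [neg_mul, neg_div]
    exact exp_neg_lt_half (one_le_sub_one_mul_div_two (by linarith))
  have hc₂ : 57 / 160 ≤ c₂ :=
    calc (57 / 160 : ℝ) = 57 / 80 * (1 / 2) := by norm_num
      _ ≤ 3 * ((d:ℝ) - 1) / (4 * ((d:ℝ) + 1)) * (1 - exp (-((d:ℝ) - 1) * T / 2)) :=
        mul_le_mul (prefactor_ge hd') (by linarith) (by norm_num)
          ((by norm_num : (0 : ℝ) ≤ 57 / 80).trans (prefactor_ge hd'))
  rw [mul_assoc, hc₁T]
  linarith
end
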